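/- arXiv:1208.5454 — 4 statements merged into one kernel-verified Lean document; each statement's English description precedes it below -/
import Mathlib

section
/- In the ladder system topology on ω₁, a subset C ⊆ ω₁ has compact closure if and only if C is contained in the union of a finite set and finitely many ladders s_α. Consequently, every compact subset of ω_S is countable. -/
open Topology OnePoint

noncomputable def omega1 : Ordinal := (Cardinal.aleph 1).ord

def IsClubIn (C : Set Ordinal) : Prop :=
  C ⊆ Set.Iio omega1 ∧
  (∀ o, o < omega1 → o ≠ 0 → (∀ p < o, ∃ q ∈ C, p < q ∧ q < o) → o ∈ C) ∧
  (∀ o, o < omega1 → ∃ p ∈ C, o < p)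

/-- The ordinals below `ω₁`. -/
abbrev Om : Type _ := {o : Ordinal // o < omega1}

/-- A ladder system on `ω₁`: for each countable limit ordinal `α`, a strictly increasing
sequence of non-limit ordinals converging to `α`. -/
structure LadderSystem where
  s : Om → ℕ → Om
  strictMono : ∀ α : Om, Order.IsSuccLimit (α : Ordinal) → StrictMono fun n => (s α n : Ordinal)
  notLimit : ∀ α : Om, Order.IsSuccLimit (α : Ordinal) → ∀ n, ¬ Order.IsSuccLimit (s α n : Ordinal)
  lt_self : ∀ α : Om, Order.IsSuccLimit (α : Ordinal) → ∀ n, (s α n : Ordinal) < (α : Ordinal)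
  conv : ∀ α : Om, Order.IsSuccLimit (α : Ordinal) → ∀ β < (α : Ordinal), ∃ n, β < (s α n : Ordinal)

/-- The ladder system topology on `ω₁`: non-limit ordinals are isolated, and a set is a
neighborhood of a limit ordinal `α` iff it contains `α` and cofinitely many points of the
ladder `s_α`. -/
def ladderTop (S : LadderSystem) : TopologicalSpace Om where
  IsOpen U := ∀ α ∈ U, Order.IsSuccLimit (α : Ordinal) → {n | S.s α n ∉ U}.Finite
  isOpen_univ := by intro α _ _; simp
  isOpen_inter := by
    intro U V hU hV α hα hlim
    refine ((hU α hα.1 hlim).union (hV α hα.2 hlim)).subset ?_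
    intro n hn
    simp only [Set.mem_setOf_eq, Set.mem_inter_iff, Set.mem_union] at hn ⊢
    tauto
  isOpen_sUnion := by
    intro T hT α hα hlim
    obtain ⟨t, ht, hαt⟩ := hα
    exact (hT t ht α hαt hlim).subset fun n hn h => hn ⟨t, ht, h⟩

/-- The topology of the one-point compactification `K_S` of the ladder system space. -/
def ksTop (S : LadderSystem) : TopologicalSpace (OnePoint Om) :=
  @OnePoint.instTopologicalSpace Om (ladderTop S)

/-!
Every point has a neighbourhood of the form `{x}` (for `x` not a limit) or `{α} ∪ s_α`
(for `α` a limit), so a compact set is covered by finitely many of these. Conversely, a ladder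
converges to its limit, so `{α} ∪ s_α` is compact; it is also closed, because the ladder of any
other limit `β` meets `s_α` in finitely many points (below `min α β` each ladder has only
finitely many terms). Hence a set covered by a finite set and finitely many ladders has its
closure inside the compact set `F ∪ ⋃ ({α} ∪ s_α)`.
-/

namespace LadderSystem

variable (S : LadderSystem)

def IsCoveredByLadders (C : Set Om) : Prop :=
  ∃ (F : Set Om) (G : Finset Om), F.Finite ∧ (∀ α ∈ G, Order.IsSuccLimit (α : Ordinal)) ∧
    C ⊆ F ∪ ⋃ α ∈ G, Set.range (S.s α)

theorem s_injective {α : Om} (hα : Order.IsSuccLimit (α : Ordinal)) :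
    Function.Injective (S.s α) :=
  fun _ _ h => (S.strictMono α hα).injective (congrArg Subtype.val h)

theorem finite_setOf_s_lt {α : Om} (hα : Order.IsSuccLimit (α : Ordinal)) {β : Ordinal}
    (hβ : β < α) : {n | (S.s α n : Ordinal) < β}.Finite := by
  obtain ⟨m, hm⟩ := S.conv α hα β hβ
  exact (Set.finite_Iio m).subset fun n hn => (S.strictMono α hα).lt_iff_lt.mp (hn.trans hm)

theorem finite_setOf_s_mem_range {α β : Om} (hα : Order.IsSuccLimit (α : Ordinal))
    (hβ : Order.IsSuccLimit (β : Ordinal)) (hne : β ≠ α) :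
    {n | S.s β n ∈ Set.range (S.s α)}.Finite := by
  rcases (Subtype.coe_ne_coe.mpr hne).lt_or_gt with hlt | hgt
  · refine (((S.finite_setOf_s_lt hα hlt).image (S.s α)).preimage
      (S.s_injective hβ).injOn).subset ?_
    rintro n ⟨k, hk⟩
    exact ⟨k, show (S.s α k : Ordinal) < β from hk ▸ S.lt_self β hβ n, hk⟩
  · refine (S.finite_setOf_s_lt hβ hgt).subset ?_
    rintro n ⟨k, hk⟩
    exact show (S.s β n : Ordinal) < α from hk ▸ S.lt_self α hα k

theorem isOpen_singleton {x : Om} (hx : ¬ Order.IsSuccLimit (x : Ordinal)) :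
    IsOpen[ladderTop S] {x} := by
  rintro _ rfl hlim
  exact absurd hlim hx

theorem isOpen_insert_range {α : Om} (hα : Order.IsSuccLimit (α : Ordinal)) :
    IsOpen[ladderTop S] (insert α (Set.range (S.s α))) := by
  rintro β (rfl | ⟨n, rfl⟩) hβ
  · simp
  · exact absurd hβ (S.notLimit α hα n)

theorem isClosed_insert_range {α : Om} (hα : Order.IsSuccLimit (α : Ordinal)) :
    IsClosed[ladderTop S] (insert α (Set.range (S.s α))) := by
  let := ladderTop S
  rw [← isOpen_compl_iff]
  intro β hβ hβlim
  have hne : β ≠ α := fun h => hβ (h ▸ Set.mem_insert _ _)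
  refine (S.finite_setOf_s_mem_range hα hβlim hne).subset fun n hn => ?_
  rcases not_not.mp hn with h | h
  · exact absurd (h ▸ hα) (S.notLimit β hβlim n)
  · exact h

theorem t1Space : @T1Space Om (ladderTop S) := by
  let := ladderTop S
  refine ⟨fun x => ?_⟩
  rw [← isOpen_compl_iff]
  intro β _ hβ
  exact (Set.finite_singleton x).preimage (S.s_injective hβ).injOn |>.subset fun n hn => by
    simpa using hn

theorem tendsto_s {α : Om} (hα : Order.IsSuccLimit (α : Ordinal)) :
    Filter.Tendsto (S.s α) Filter.atTop (@nhds Om (ladderTop S) α) := by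
  let := ladderTop S
  rw [tendsto_nhds, ← Nat.cofinite_eq_atTop]
  intro U hU hαU
  filter_upwards [(hU α hαU hα).eventually_cofinite_notMem] with n hn
  exact not_not.mp hn

variable {S}

theorem IsCoveredByLadders.mono {C D : Set Om} (hD : S.IsCoveredByLadders D) (hCD : C ⊆ D) :
    S.IsCoveredByLadders C :=
  let ⟨F, G, hF, hG, hsub⟩ := hD
  ⟨F, G, hF, hG, hCD.trans hsub⟩

theorem IsCoveredByLadders.countable {C : Set Om} (hC : S.IsCoveredByLadders C) :
    C.Countable :=
  let ⟨_, G, hF, _, hsub⟩ := hC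
  (hF.countable.union (G.countable_toSet.biUnion fun _ _ => Set.countable_range _)).mono hsub

theorem IsCoveredByLadders.isCompact_closure {C : Set Om} (hC : S.IsCoveredByLadders C) :
    @IsCompact Om (ladderTop S) (closure[ladderTop S] C) := by
  let := ladderTop S
  have := S.t1Space
  obtain ⟨F, G, hF, hG, hsub⟩ := hC
  set B := F ∪ ⋃ α ∈ G, insert α (Set.range (S.s α))
  have hB : IsCompact B := hF.isCompact.union <| G.finite_toSet.isCompact_biUnion fun α hα =>
    (S.tendsto_s (hG α hα)).isCompact_insert_range
  have hBclosed : IsClosed B := hF.isClosed.union <|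
    isClosed_biUnion_finset fun α hα => S.isClosed_insert_range (hG α hα)
  refine hB.of_isClosed_subset isClosed_closure (closure_minimal (hsub.trans ?_) hBclosed)
  exact Set.union_subset_union_right _ (Set.iUnion₂_mono fun _ _ => Set.subset_insert _ _)

theorem IsCoveredByLadders.of_isCompact {K : Set Om} (hK : @IsCompact Om (ladderTop S) K) :
    S.IsCoveredByLadders K := by
  classical
  let := ladderTop S
  let U : Om → Set Om := fun y =>
    if Order.IsSuccLimit (y : Ordinal) then insert y (Set.range (S.s y)) else {y}
  have hU : ∀ y, y ∈ U y ∧ IsOpen (U y) := by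
    intro y
    by_cases h : Order.IsSuccLimit (y : Ordinal)
    · simp [U, h, S.isOpen_insert_range h]
    · simp [U, h, S.isOpen_singleton h]
  obtain ⟨t, ht⟩ := hK.elim_finite_subcover U (fun y => (hU y).2)
    fun x _ => Set.mem_iUnion.2 ⟨x, (hU x).1⟩
  refine ⟨t, t.filter fun y => Order.IsSuccLimit (y : Ordinal), t.finite_toSet,
    fun α hα => (Finset.mem_filter.1 hα).2, fun x hx => ?_⟩
  obtain ⟨y, hyt, hxy⟩ := Set.mem_iUnion₂.1 (ht hx)
  by_cases h : Order.IsSuccLimit (y : Ordinal)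
  · simp only [U, if_pos h] at hxy
    rcases hxy with rfl | hr
    · exact Or.inl hyt
    · exact Or.inr (Set.mem_biUnion (Finset.mem_filter.2 ⟨hyt, h⟩) hr)
  · simp only [U, if_neg h, Set.mem_singleton_iff] at hxy
    exact Or.inl (hxy ▸ hyt)

theorem isCompact_closure_iff {C : Set Om} :
    @IsCompact Om (ladderTop S) (closure[ladderTop S] C) ↔ S.IsCoveredByLadders C :=
  let := ladderTop S
  ⟨fun h => (IsCoveredByLadders.of_isCompact h).mono subset_closure,
    IsCoveredByLadders.isCompact_closure⟩

end LadderSystem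

/-- A subset of the ladder system space has compact closure iff it is contained in the
union of a finite set and finitely many ladders; consequently every compact subset is
countable. -/
theorem stmt9 (S : LadderSystem) :
    (∀ C : Set Om,
      @IsCompact Om (ladderTop S) (closure[ladderTop S] C) ↔
        ∃ (F : Set Om) (G : Finset Om), F.Finite ∧ (∀ α ∈ G, Order.IsSuccLimit (α : Ordinal)) ∧
          C ⊆ F ∪ ⋃ α ∈ G, Set.range (S.s α)) ∧
    (∀ K : Set Om, @IsCompact Om (ladderTop S) K → K.Countable) :=
  ⟨fun _ => LadderSystem.isCompact_closure_iff,
    fun _ hK => (LadderSystem.IsCoveredByLadders.of_isCompact hK).countable⟩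
end

section
/- Let K_S be the one-point compactification of the ladder system space ω_S. If φ : K_S → K_S is continuous and φ(∞) ≠ ∞, then the range of φ is countable. -/
open Topology OnePoint

/-!
The initial segments `[0, a]` of `ω_S` are open (a ladder of a limit `α ≤ a` lies below `α`) and
countable, so every compact subset of `ω_S` is countable. If `φ ∞ = a`, then `φ⁻¹ [0, a]` is a
neighbourhood of `∞`, hence contains everything outside some compact `K ⊆ ω_S`; therefore the range
of `φ` lies in the countable set `[0, a] ∪ φ '' K`.
-/

theorem Ordinal.countable_Iio_of_lt_ord_aleph_one {o : Ordinal}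
    (ho : o < (Cardinal.aleph 1).ord) : (Set.Iio o).Countable := by
  rw [← Cardinal.le_aleph0_iff_set_countable, Cardinal.mk_Iio_ordinal, Cardinal.lift_le_aleph0,
    ← Cardinal.lt_aleph_one_iff]
  exact Cardinal.lt_ord.1 ho

theorem Om.countable_Iic (a : Om) : (Set.Iic a).Countable := by
  rw [← Set.Iio_insert]
  exact ((Ordinal.countable_Iio_of_lt_ord_aleph_one a.2).preimage Subtype.val_injective).insert a

theorem IsCompact.countable_of_forall_exists_countable_mem_nhds {X : Type*} [TopologicalSpace X]
    {K : Set X} (hK : IsCompact K) (h : ∀ x ∈ K, ∃ U ∈ 𝓝 x, U.Countable) : K.Countable := by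
  choose U hU hUc using h
  obtain ⟨t, ht⟩ := hK.elim_nhds_subcover' U hU
  exact (t.countable_toSet.biUnion fun x _ => hUc x x.2).mono ht

theorem OnePoint.countable_range_of_countable_nhds {X Y : Type*} [TopologicalSpace X]
    [TopologicalSpace Y] (hX : ∀ x : X, ∃ U ∈ 𝓝 x, U.Countable) {φ : OnePoint X → Y}
    (hφ : Continuous φ) {U : Set Y} (hU : U ∈ 𝓝 (φ ∞)) (hUc : U.Countable) :
    (Set.range φ).Countable := by
  obtain ⟨K, ⟨-, hK⟩, hKU⟩ := hasBasis_nhds_infty.mem_iff.1 (hφ.continuousAt hU)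
  have hKc : K.Countable := hK.countable_of_forall_exists_countable_mem_nhds fun x _ => hX x
  refine (hUc.union (hKc.image (φ ∘ (↑)))).mono ?_
  rintro _ ⟨x, rfl⟩
  induction x using OnePoint.rec with
  | infty => exact Or.inl (mem_of_mem_nhds hU)
  | coe x =>
    by_cases hx : x ∈ K
    · exact Or.inr ⟨x, hx, rfl⟩
    · exact Or.inl (hKU (Or.inl ⟨x, hx, rfl⟩))

namespace LadderSystem

variable (S : LadderSystem)

theorem isOpen_Iic (a : Om) : IsOpen[ladderTop S] (Set.Iic a) := by
  intro α hα hlim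
  convert Set.finite_empty
  exact Set.eq_empty_of_forall_notMem fun n hn => hn ((S.lt_self α hlim n).le.trans hα)

theorem exists_countable_mem_nhds (a : Om) :
    ∃ U ∈ @nhds Om (ladderTop S) a, U.Countable :=
  ⟨Set.Iic a, @IsOpen.mem_nhds _ (ladderTop S) _ _ (S.isOpen_Iic a) Set.self_mem_Iic,
    Om.countable_Iic a⟩

end LadderSystem

/-- A continuous self-map of `K_S` not fixing the point at infinity has countable range. -/
theorem stmt12 (S : LadderSystem) (φ : OnePoint Om → OnePoint Om)
    (hc : Continuous[ksTop S, ksTop S] φ) (h : φ ∞ ≠ ∞) :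
    (Set.range φ).Countable := by
  let := ladderTop S
  obtain ⟨a, ha⟩ := OnePoint.ne_infty_iff_exists.1 h
  have hnhds : ((↑) '' Set.Iic a : Set (OnePoint Om)) ∈ 𝓝 (φ ∞) := by
    rw [← ha]
    exact (isOpen_image_coe.2 (S.isOpen_Iic a)).mem_nhds ⟨a, Set.self_mem_Iic, rfl⟩
  exact OnePoint.countable_range_of_countable_nhds S.exists_countable_mem_nhds hc hnhds
    ((Om.countable_Iic a).image _)
end

section
/- Let φ : K_S → K_S be a continuous self-map of the one-point compactification of the ladder system space with φ(∞) = ∞. Then there exists a club subset F ⊆ ω₁ such that for every α ∈ F, either φ(α) = α or φ(α) = ∞. -/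
open Topology OnePoint

/-!
Compact subsets of `ω_S` are bounded, because the initial segments `Iic x` are open, and points
of `ω_S` are closed; hence each fibre of `φ` over a point of `ω₁` is compact in `ω_S` and so
bounded. Let `b γ` bound both `φ γ` and the fibre over `γ`; the limit ordinals closed under `b`
form a club (iterate `b` countably often and take suprema). For such an `α` with `φ α = β`,
the case `β < α` is impossible since `α ≤ b β < α`. If `β > α`, continuity at `α` gives a rung
`s_α n < α` of the ladder with `φ (s_α n) > α`, whereas `φ (s_α n) ≤ b (s_α n) < α`.
-/

open Order Set

theorem isSuccLimit_omega1 : IsSuccLimit omega1 :=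
  Cardinal.isSuccLimit_ord Cardinal.aleph0_lt_aleph_one.le

theorem countable_Iio_of_lt_omega1 {β : Ordinal} (hβ : β < omega1) : (Iio β).Countable := by
  rw [← Cardinal.le_aleph0_iff_set_countable, Cardinal.mk_Iio_ordinal, Cardinal.lift_le_aleph0,
    ← Order.lt_succ_iff, Cardinal.succ_aleph0]
  exact Cardinal.lt_ord.1 hβ

theorem iSup_lt_omega1 {ι : Type*} [Countable ι] {f : ι → Ordinal} (hf : ∀ i, f i < omega1) :
    ⨆ i, f i < omega1 := by
  rw [omega1, Cardinal.ord_aleph] at hf ⊢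
  exact Ordinal.iSup_lt_omega_one hf

section ClosurePoints

variable (b : Om → Om)

def closurePoints : Set Ordinal :=
  {α | α < omega1 ∧ IsSuccLimit α ∧ ∀ γ : Om, (γ : Ordinal) < α → (b γ : Ordinal) < α}

noncomputable def closureStep (β : Ordinal) : Ordinal :=
  succ (β ⊔ ⨆ γ : {γ : Om // (γ : Ordinal) < β}, (b γ : Ordinal))

variable {b}

theorem lt_closureStep_self (β : Ordinal) : β < closureStep b β :=
  lt_succ_of_le le_sup_left

theorem lt_closureStep {γ : Om} {β : Ordinal} (hγ : (γ : Ordinal) < β) :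
    (b γ : Ordinal) < closureStep b β := by
  refine lt_succ_of_le (le_sup_of_le_right ?_)
  exact le_ciSup (f := fun γ : {γ : Om // (γ : Ordinal) < β} => (b γ : Ordinal))
    ⟨omega1, forall_mem_range.2 fun γ => (b γ).2.le⟩ ⟨γ, hγ⟩

theorem closureStep_lt_omega1 {β : Ordinal} (hβ : β < omega1) : closureStep b β < omega1 := by
  have : Countable {γ : Om // (γ : Ordinal) < β} :=
    ((countable_Iio_of_lt_omega1 hβ).preimage Subtype.val_injective).to_subtype
  exact isSuccLimit_omega1.succ_lt (max_lt hβ (iSup_lt_omega1 fun γ => (b γ).2))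

theorem exists_mem_closurePoints_gt {o : Ordinal} (ho : o < omega1) :
    ∃ α ∈ closurePoints b, o < α := by
  set g := closureStep b
  have hiter : ∀ n, g^[n] o < omega1 := fun n => by
    induction n with
    | zero => exact ho
    | succ n ih => rw [Function.iterate_succ_apply']; exact closureStep_lt_omega1 ih
  have hstep : ∀ γ < Ordinal.nfp g o, ∃ β, γ < β ∧ g β ≤ Ordinal.nfp g o := fun γ hγ => by
    obtain ⟨n, hn⟩ := Ordinal.lt_nfp_iff.1 hγ
    refine ⟨_, hn, ?_⟩
    rw [← Function.iterate_succ_apply' g]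
    exact Ordinal.iterate_le_nfp g o (n + 1)
  have hlt : o < Ordinal.nfp g o := (lt_closureStep_self o).trans_le (Ordinal.iterate_le_nfp g o 1)
  refine ⟨_, ⟨?_, ?_, fun γ hγ => ?_⟩, hlt⟩
  · rw [← Ordinal.iSup_iterate_eq_nfp]
    exact iSup_lt_omega1 hiter
  · refine Ordinal.isSuccLimit_iff.2 ⟨hlt.ne_bot, isSuccPrelimit_of_succ_lt fun γ hγ => ?_⟩
    obtain ⟨β, hγβ, hβ⟩ := hstep γ hγ
    exact (succ_le_of_lt hγβ).trans_lt ((lt_closureStep_self β).trans_le hβ)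
  · obtain ⟨β, hγβ, hβ⟩ := hstep γ hγ
    exact (lt_closureStep hγβ).trans_le hβ

theorem isClubIn_closurePoints : IsClubIn (closurePoints b) := by
  refine ⟨fun α hα => hα.1, fun o ho ho0 hcof => ⟨ho, ?_, fun γ hγ => ?_⟩,
    fun o ho => exists_mem_closurePoints_gt ho⟩
  · refine Ordinal.isSuccLimit_iff.2 ⟨ho0, isSuccPrelimit_of_succ_lt fun p hp => ?_⟩
    obtain ⟨q, -, hpq, hqo⟩ := hcof p hp
    exact (succ_le_of_lt hpq).trans_lt hqo
  · obtain ⟨q, hq, hγq, hqo⟩ := hcof γ hγ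
    exact (hq.2.2 γ hγq).trans hqo

end ClosurePoints

instance : Nonempty Om := ⟨⟨0, isSuccLimit_omega1.bot_lt⟩⟩

namespace LadderSystem

variable (S : LadderSystem)

theorem isOpen_iff {U : Set Om} :
    IsOpen[ladderTop S] U ↔ ∀ α ∈ U, IsSuccLimit (α : Ordinal) → {n | S.s α n ∉ U}.Finite :=
  Iff.rfl

theorem isOpen_of_isLowerSet {U : Set Om} (hU : IsLowerSet U) : IsOpen[ladderTop S] U := by
  refine (S.isOpen_iff).2 fun α hα hlim => ?_
  convert finite_empty
  exact eq_empty_of_forall_notMem fun n hn => hn (hU (S.lt_self α hlim n).le hα)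

theorem isOpen_Ioi (x : Om) : IsOpen[ladderTop S] (Ioi x) := by
  refine (S.isOpen_iff).2 fun α hα hlim => ?_
  obtain ⟨N, hN⟩ := S.conv α hlim x hα
  refine (finite_Iio N).subset fun n hn => mem_Iio.2 (lt_of_not_ge fun hNn => hn ?_)
  exact hN.trans_le ((S.strictMono α hlim).monotone hNn)

theorem isClosed_singleton (x : Om) : IsClosed[ladderTop S] {x} := by
  let _ := ladderTop S
  rw [← isOpen_compl_iff, ← Iio_union_Ioi]
  exact (S.isOpen_of_isLowerSet (isLowerSet_Iio x)).union (S.isOpen_Ioi x)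

theorem bddAbove_of_isCompact {K : Set Om} (hK : @IsCompact Om (ladderTop S) K) :
    BddAbove K := by
  let _ := ladderTop S
  obtain ⟨x, hx⟩ := hK.elim_directed_cover Iic
    (fun x => S.isOpen_of_isLowerSet (isLowerSet_Iic x))
    (fun x _ => mem_iUnion.2 ⟨x, mem_Iic.2 le_rfl⟩)
    (Monotone.directed_le fun _ _ => Iic_subset_Iic.2)
  exact ⟨x, hx⟩

theorem exists_ladder_mem {U : Set Om} (hU : IsOpen[ladderTop S] U) {α : Om} (hα : α ∈ U)
    (hlim : IsSuccLimit (α : Ordinal)) : ∃ n, S.s α n ∈ U := by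
  simpa using ((S.isOpen_iff).1 hU α hα hlim).exists_notMem

variable {S} {φ : OnePoint Om → OnePoint Om}

theorem bddAbove_fiber (hc : Continuous[ksTop S, ksTop S] φ) (h : φ ∞ = ∞) (y : Om) :
    BddAbove {x : Om | φ x = y} := by
  let _ := ladderTop S
  have hy : IsClosed ({(y : OnePoint Om)} : Set (OnePoint Om)) := by
    rw [← image_singleton, OnePoint.isClosed_image_coe]
    exact ⟨S.isClosed_singleton y, isCompact_singleton⟩
  have hinfty : ∞ ∉ φ ⁻¹' {(y : OnePoint Om)} := by simp [h]
  exact S.bddAbove_of_isCompact ((OnePoint.isClosed_iff_of_notMem hinfty).1 (hy.preimage hc)).2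

theorem exists_map_ladder_mem (hc : Continuous[ksTop S, ksTop S] φ) {α : Om}
    (hlim : IsSuccLimit (α : Ordinal)) {V : Set (OnePoint Om)} (hV : IsOpen[ksTop S] V)
    (hαV : φ α ∈ V) : ∃ n, φ (S.s α n) ∈ V :=
  let _ := ladderTop S
  S.exists_ladder_mem ((hV.preimage hc).preimage OnePoint.continuous_coe) hαV hlim

end LadderSystem

/-- If `φ : K_S → K_S` is continuous and fixes `∞`, then there is a club `F ⊆ ω₁` such that
every `α ∈ F` is either fixed by `φ` or mapped to `∞`. -/
theorem stmt13 (S : LadderSystem) (φ : OnePoint Om → OnePoint Om)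
    (hc : Continuous[ksTop S, ksTop S] φ) (h : φ ∞ = ∞) :
    ∃ F : Set Ordinal, IsClubIn F ∧
      ∀ x : Om, (x : Ordinal) ∈ F → φ ↑x = ↑x ∨ φ ↑x = ∞ := by
  have himage : ∀ γ : Om, BddAbove {y : Om | φ γ = y} := fun γ =>
    (Set.Subsingleton.finite fun y hy z hz => OnePoint.coe_injective (hy.symm.trans hz)).bddAbove
  choose b hb using fun γ : Om => (LadderSystem.bddAbove_fiber hc h γ).union (himage γ)
  refine ⟨closurePoints b, isClubIn_closurePoints, ?_⟩
  rintro x ⟨-, hlim, hclosed⟩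
  cases hx : φ x with
  | infty => exact Or.inr rfl
  | coe y =>
    rcases lt_trichotomy y x with hyx | rfl | hxy
    · exact absurd (hclosed y hyx) (not_lt.2 (hb y (Or.inl hx)))
    · exact Or.inl rfl
    · let _ := ladderTop S
      obtain ⟨n, z, hxz, hz⟩ := LadderSystem.exists_map_ladder_mem hc hlim
        (OnePoint.isOpen_image_coe.2 (S.isOpen_Ioi x)) (hx ▸ mem_image_of_mem _ hxy)
      have hzb : z ≤ b (S.s x n) := hb _ (Or.inr hz.symm)
      exact absurd (hclosed _ (S.lt_self x hlim n)) (not_lt.2 ((le_of_lt hxz).trans hzb))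
end

section
/- Let K be a compact Hausdorff space and φ : K → K continuous. Suppose there is an uncountable set A ⊆ K with φ restricted to A injective and φ(A) ∩ A = ∅. Then for every bounded Borel function g : K → ℝ, the map on the dual space C(K)* given by μ ↦ (C_φ)*μ + (∫ g dμ restricted appropriately), namely μ ↦ (f ↦ μ(f ∘ φ)) + (f ↦ ∫ f g dμ), sends the set of Dirac measures {δ_x : x ∈ A} to an uncountable set that is discrete in the norm topology of C(K)*; in particular this operator does not have separable range. -/
/-!
A function `f : C(K, ℝ)` with `‖f‖ ≤ 1`, `f (φ x) = 1` and `f = 0` on `{x, y, φ y}` (Urysohn)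
evaluates `Λ x - Λ y` to `1`; such an `f` exists because `φ x` is none of these three points, by
disjointness of `φ '' A` and `A` and injectivity of `φ` on `A`. So `Λ` maps `A` injectively onto a
`1`-separated set, which is uncountable and, being discrete, cannot be separable.
-/

open TopologicalSpace ContinuousMap

theorem TopologicalSpace.IsSeparable.countable_of_pairwise_le_dist {X : Type*}
    [PseudoMetricSpace X] {s : Set X} {r : ℝ} (hr : 0 < r) (hs : s.Pairwise (r ≤ dist · ·))
    (hsep : IsSeparable s) : s.Countable := by
  have := hsep.separableSpace
  have : DiscreteTopology s :=
    .of_forall_le_dist hr fun a b hab => hs a.2 b.2 (Subtype.coe_ne_coe.mpr hab)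
  exact Set.countable_coe_iff.mp (separableSpace_iff_countable.mp ‹_›)

theorem ContinuousMap.exists_norm_le_one_eq_one_eqOn_zero {X : Type*} [TopologicalSpace X]
    [CompactSpace X] [NormalSpace X] [T1Space X] {s : Set X} (hs : s.Finite) {p : X}
    (hp : p ∉ s) : ∃ f : C(X, ℝ), ‖f‖ ≤ 1 ∧ f p = 1 ∧ Set.EqOn f 0 s := by
  obtain ⟨f, hf0, hf1, hf01⟩ := exists_continuous_zero_one_of_isClosed hs.isClosed
    isClosed_singleton (Set.disjoint_singleton_right.mpr hp)
  refine ⟨f, (f.norm_le zero_le_one).mpr fun z => ?_, hf1 rfl, hf0⟩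
  rw [Real.norm_eq_abs, abs_le]
  exact ⟨by linarith [(hf01 z).1], (hf01 z).2⟩

theorem ContinuousMap.one_le_norm_evalCLM_add_smul_sub {X : Type*} [TopologicalSpace X]
    [CompactSpace X] [T2Space X] {p q x y : X} (a b : ℝ) (hp : p ∉ ({x, y, q} : Set X)) :
    1 ≤ ‖(evalCLM ℝ p + a • evalCLM ℝ x - (evalCLM ℝ q + b • evalCLM ℝ y) :
      C(X, ℝ) →L[ℝ] ℝ)‖ := by
  obtain ⟨f, hf, hfp, hf0⟩ := exists_norm_le_one_eq_one_eqOn_zero (Set.toFinite _) hp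
  set L : C(X, ℝ) →L[ℝ] ℝ := evalCLM ℝ p + a • evalCLM ℝ x - (evalCLM ℝ q + b • evalCLM ℝ y)
  have hval : L f = 1 := by
    simp [L, hfp, hf0 (.inl rfl), hf0 (.inr (.inl rfl)), hf0 (.inr (.inr rfl))]
  simpa [hval] using L.unit_le_opNorm f hf

theorem stmt17_general {K : Type*} [TopologicalSpace K] [CompactSpace K] [T2Space K]
    (φ : K → K) (A : Set K) (hA : ¬ A.Countable)
    (hinj : Set.InjOn φ A) (hdisj : Disjoint (φ '' A) A)
    (g : K → ℝ) :
    letI Λ : K → (C(K, ℝ) →L[ℝ] ℝ) := fun x =>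
      ContinuousMap.evalCLM ℝ (φ x) + g x • ContinuousMap.evalCLM ℝ x
    ¬ (Λ '' A).Countable ∧
    (∀ x ∈ A, ∀ y ∈ A, x ≠ y → 1 ≤ ‖Λ x - Λ y‖) ∧
    ¬ TopologicalSpace.IsSeparable (Λ '' A) := by
  set Λ : K → (C(K, ℝ) →L[ℝ] ℝ) := fun x => evalCLM ℝ (φ x) + g x • evalCLM ℝ x
  have hsep : ∀ x ∈ A, ∀ y ∈ A, x ≠ y → 1 ≤ ‖Λ x - Λ y‖ := by
    intro x hx y hy hxy
    have hφx : φ x ∉ A := Set.disjoint_left.mp hdisj (Set.mem_image_of_mem φ hx)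
    refine one_le_norm_evalCLM_add_smul_sub _ _ ?_
    rintro (h | h | h)
    exacts [absurd hx (h ▸ hφx), absurd hy (h ▸ hφx), hxy (hinj hx hy h)]
  have hdist : ∀ x ∈ A, ∀ y ∈ A, x ≠ y → 1 ≤ dist (Λ x) (Λ y) := by
    intro x hx y hy hxy
    rw [dist_eq_norm (Λ x) (Λ y)]
    exact hsep x hx y hy hxy
  have hpair : (Λ '' A).Pairwise (1 ≤ dist · ·) := by
    rintro _ ⟨x, hx, rfl⟩ _ ⟨y, hy, rfl⟩ hne
    exact hdist x hx y hy (ne_of_apply_ne Λ hne)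
  have hΛinj : Set.InjOn Λ A := fun x hx y hy h => by_contra fun hxy => by
    simpa [h] using (hdist x hx y hy hxy).trans_lt' one_pos
  have huncount : ¬ (Λ '' A).Countable := fun h =>
    hA ((Set.mapsTo_image Λ A).countable_of_injOn hΛinj h)
  exact ⟨huncount, hsep, fun h => huncount (h.countable_of_pairwise_le_dist one_pos hpair)⟩

/-- If `φ : K → K` is continuous on a compact Hausdorff space, `A ⊆ K` is uncountable,
`φ` is injective on `A` and `φ(A) ∩ A = ∅`, then for any bounded Borel `g` the operator
`(C_φ)* + M_g*` maps the Dirac functionals `{δ_x : x ∈ A}` (on which it acts by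
`δ_x ↦ (f ↦ f (φ x) + g x * f x)`) to an uncountable, norm-discrete (1-separated) set;
in particular this set is not separable, so the operator does not have separable range. -/
theorem stmt17 {K : Type*} [TopologicalSpace K] [CompactSpace K] [T2Space K]
    (φ : K → K) (hφ : Continuous φ) (A : Set K) (hA : ¬ A.Countable)
    (hinj : Set.InjOn φ A) (hdisj : Disjoint (φ '' A) A)
    (g : K → ℝ) (hg : @Measurable K ℝ (borel K) (borel ℝ) g) (hgb : ∃ M, ∀ x, |g x| ≤ M) :
    letI Λ : K → (C(K, ℝ) →L[ℝ] ℝ) := fun x =>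
      ContinuousMap.evalCLM ℝ (φ x) + g x • ContinuousMap.evalCLM ℝ x
    ¬ (Λ '' A).Countable ∧
    (∀ x ∈ A, ∀ y ∈ A, x ≠ y → 1 ≤ ‖Λ x - Λ y‖) ∧
    ¬ TopologicalSpace.IsSeparable (Λ '' A) :=
  stmt17_general φ A hA hinj hdisj g
end
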